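/- The combs Γ_{1a} and the words 1b are dual bases: (Γ_{1a}, 1b) = (a, b), i.e., the pairing is 1 if a = b as permutations of x_2,...,x_{n-1} and 0 otherwise. -/

import Mathlib

open scoped BigOperators

/-- `Wd m` : the algebra of formal ℚ-linear combinations of words in letters `x_1,…,x_m`
(represented as `Fin m`), with concatenation product. -/
abbrev Wd (m : ℕ) := MonoidAlgebra ℚ (FreeMonoid (Fin m))

/-- The word monomial associated to a list of letters. -/
noncomputable def word {m : ℕ} (l : List (Fin m)) : Wd m :=
  MonoidAlgebra.single (FreeMonoid.ofList l) 1

/-- All interleavings (shuffles) of two lists. -/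
def shuffles {α : Type*} : List α → List α → List (List α)
  | [], bs => [bs]
  | a :: as, [] => [a :: as]
  | a :: as, b :: bs =>
      (shuffles as (b :: bs)).map (a :: ·) ++ (shuffles (a :: as) bs).map (b :: ·)

/-- The shuffle product of two words, as an element of `Wd m`. -/
noncomputable def shuffleProd {m : ℕ} (a b : List (Fin m)) : Wd m :=
  ((shuffles a b).map word).sum

/-- Binary trees representing iterated commutators (Lie monomials). -/
inductive LieTree (m : ℕ) where
  | leaf : Fin m → LieTree m
  | node : LieTree m → LieTree m → LieTree m

/-- Expansion of a Lie monomial in the word algebra, via `[u,v] = uv - vu`. -/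
noncomputable def LieTree.expand {m : ℕ} : LieTree m → Wd m
  | .leaf i => word [i]
  | .node u v => u.expand * v.expand - v.expand * u.expand

/-- The list of leaf labels of a Lie tree, read left to right. -/
def LieTree.leaves {m : ℕ} : LieTree m → List (Fin m)
  | .leaf i => [i]
  | .node u v => u.leaves ++ v.leaves

/-- `Lie(m)` : the span of the multilinear Lie monomials (each letter used exactly once). -/
noncomputable def LieSub (m : ℕ) : Submodule ℚ (Wd m) :=
  Submodule.span ℚ
    {x | ∃ T : LieTree m, T.leaves.Perm (List.finRange m) ∧ x = LieTree.expand T}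

/-- `W(m)` : the span of the multilinear words (each letter used exactly once). -/
noncomputable def Wsub (m : ℕ) : Submodule ℚ (Wd m) :=
  Submodule.span ℚ {x | ∃ l : List (Fin m), l.Perm (List.finRange m) ∧ x = word l}

/-- `Sh(m)` : the span of nontrivial shuffles of multilinear words. -/
noncomputable def ShSub (m : ℕ) : Submodule ℚ (Wd m) :=
  Submodule.span ℚ
    {x | ∃ a b : List (Fin m), a ≠ [] ∧ b ≠ [] ∧ (a ++ b).Perm (List.finRange m) ∧
      x = shuffleProd a b}

/-- The left-nested comb `Γ_{1a} = [...[[x_1, a_1], a_2], …]` (the letter `x_1` is `0`). -/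
def comb {m : ℕ} [NeZero m] (a : List (Fin m)) : LieTree m :=
  a.foldl (fun t i => LieTree.node t (LieTree.leaf i)) (LieTree.leaf 0)

/-- The finset of permutations of the letters `x_2,…,x_m` (i.e. of `(finRange m).tail`). -/
noncomputable def permsTail (m : ℕ) : Finset (List (Fin m)) :=
  ((List.finRange m).tail).permutations.toFinset

open MonoidAlgebra

lemma zero_notMem_tail_finRange (m : ℕ) [NeZero m] : (0 : Fin m) ∉ (List.finRange m).tail := by
  obtain ⟨k, rfl⟩ := Nat.exists_eq_succ_of_ne_zero (NeZero.ne m)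
  simp [List.finRange_succ, Fin.succ_ne_zero]

lemma comb_append_singleton {m : ℕ} [NeZero m] (a : List (Fin m)) (x : Fin m) :
    comb (a ++ [x]) = .node (comb a) (.leaf x) := by
  simp [comb, List.foldl_append]

section Coeff

variable {m : ℕ}

lemma coeff_word_singleton_mul_cons_of_ne (X : Wd m) {x y : Fin m} (hyx : y ≠ x)
    (l : List (Fin m)) : (word [x] * X).coeff (FreeMonoid.ofList (y :: l)) = 0 :=
  coeff_single_mul_of_forall_mul_ne _ _ fun _ hd =>
    hyx (List.head_eq_of_cons_eq (congrArg FreeMonoid.toList hd)).symm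

lemma coeff_mul_word_singleton_append_singleton (X : Wd m) (x y : Fin m) (l : List (Fin m)) :
    (X * word [x]).coeff (FreeMonoid.ofList (l ++ [y])) =
      if y = x then X.coeff (FreeMonoid.ofList l) else 0 := by
  split_ifs with hyx
  · subst hyx
    exact (coeff_mul_single_mul X 1 _ (FreeMonoid.ofList l)).trans (mul_one _)
  · refine coeff_mul_single_of_forall_mul_ne _ _ fun d hd => hyx ?_
    exact (List.append_singleton_inj.mp (congrArg FreeMonoid.toList hd)).2.symm

end Coeff

/-- Only the term of `Γ_{1a}` in which every bracket puts `x_1` on the left starts with `x_1`. -/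
lemma coeff_expand_comb_zero_cons {m : ℕ} [NeZero m] (a : List (Fin m)) (h0 : (0 : Fin m) ∉ a)
    (c : List (Fin m)) :
    (comb a).expand.coeff (FreeMonoid.ofList ((0 : Fin m) :: c)) = if a = c then 1 else 0 := by
  induction a using List.reverseRecOn generalizing c with
  | nil =>
    cases c <;> simp [comb, LieTree.expand, word]
  | append_singleton a x ih =>
    have hx : x ≠ 0 := by rintro rfl; simp at h0
    rw [comb_append_singleton, LieTree.expand, LieTree.expand, coeff_sub, Finsupp.sub_apply,
      coeff_word_singleton_mul_cons_of_ne _ hx.symm, sub_zero]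
    rcases List.eq_nil_or_concat' c with rfl | ⟨c, y, rfl⟩
    · simpa [hx.symm] using coeff_mul_word_singleton_append_singleton (comb a).expand x 0 []
    · rw [← List.cons_append, coeff_mul_word_singleton_append_singleton,
        ih (fun h => h0 (by simp [h]))]
      obtain rfl | hyx := eq_or_ne y x
      · simp
      · simp [List.append_singleton_inj, hyx, hyx.symm]

theorem stmt4_general (n : ℕ) [NeZero (n - 1)] (a b : List (Fin (n - 1)))
    (ha : a.Perm ((List.finRange (n - 1)).tail)) :
    (comb a).expand.coeff (FreeMonoid.ofList ((0 : Fin (n - 1)) :: b)) =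
      if a = b then 1 else 0 :=
  coeff_expand_comb_zero_cons a
    (fun h => zero_notMem_tail_finRange (n - 1) (ha.mem_iff.mp h)) b

/-- the combs `Γ_{1a}` and the words `1b` are dual bases:
`(Γ_{1a}, 1b) = (a, b)` for permutations `a`, `b` of the letters `x_2,…,x_{n-1}`. -/
theorem stmt4 (n : ℕ) [NeZero (n - 1)] (a b : List (Fin (n - 1)))
    (ha : a.Perm ((List.finRange (n - 1)).tail))
    (hb : b.Perm ((List.finRange (n - 1)).tail)) :
    (comb a).expand.coeff (FreeMonoid.ofList ((0 : Fin (n - 1)) :: b)) =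
      if a = b then 1 else 0 :=
  stmt4_general n a b ha
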